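/- arXiv:2310.00544 — 2 statements merged into one kernel-verified Lean document; each statement's English description precedes it below -/
import Mathlib

section
/- Let β > 0, U : ℝ^d → ℝ, and W ∈ L^∞(ℝ^d) symmetric, with exp(−β E_N) ∈ L¹(ℝ^{Nd}) for all N ≥ 2, and suppose β < 1/(2e√2 ‖W‖_∞). Then the mean-field free energy F(ρ) = ∫ Uρ dx + (1/2)∫ ρ(W∗ρ) dx + β^{−1}∫ ρ log ρ dx has at most one minimizer among probability densities on ℝ^d: if ρ and ρ′ are two probability densities each minimizing F (equivalently, each satisfying the fixed-point relation ρ = Z^{−1}exp(−β(U+W∗ρ))), then ρ = ρ′ almost everywhere. -/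
open MeasureTheory Real

noncomputable section

/-- `ρ` is a probability density on the measure space `α`. -/
def IsProbDensity {α : Type*} [MeasureSpace α] (ρ : α → ℝ) : Prop :=
  Measurable ρ ∧ (∀ x, 0 ≤ ρ x) ∧ ∫ x, ρ x = 1

/-- The convolution `(W∗ρ)(x) = ∫ W(x−y) ρ(y) dy`. -/
def convW {d : ℕ} (W ρ : (Fin d → ℝ) → ℝ) (x : Fin d → ℝ) : ℝ :=
  ∫ y, W (x - y) * ρ y

/-- The `N`-body energy
`E_N(x_1,…,x_N) = Σ_i U(x_i) + (1/(2(N−1))) Σ_{i≠j} W(x_i − x_j)`. -/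
def energyN {d : ℕ} (U W : (Fin d → ℝ) → ℝ) (N : ℕ) (x : Fin N → (Fin d → ℝ)) : ℝ :=
  (∑ i, U (x i)) +
    (1 / (2 * ((N : ℝ) - 1))) * ∑ i, ∑ j ∈ Finset.univ.erase i, W (x i - x j)

/-! The potentials `β (U + W∗ρ)` and `β (U + W∗ρ')` of the two fixed points differ uniformly by at
most `δ = β ‖W‖_∞ ‖ρ - ρ'‖₁`. Since `|eˢ - 1| ≤ 2|s|` for `|s| ≤ 1`, Gibbs densities of potentials at
uniform distance `δ ≤ 1` are `4δ`-close in `L¹`; hence `‖ρ - ρ'‖₁ ≤ 4β‖W‖_∞ ‖ρ - ρ'‖₁`, and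
`4β‖W‖_∞ < 2e√2 β‖W‖_∞ < 1` forces `‖ρ - ρ'‖₁ = 0`. -/

theorem abs_exp_sub_exp_le {a b : ℝ} (h : |a - b| ≤ 1) :
    |exp a - exp b| ≤ 2 * |a - b| * exp b := by
  have hexp : exp a - exp b = exp b * (exp (a - b) - 1) := by
    rw [mul_sub, ← exp_add, add_sub_cancel, mul_one]
  rw [hexp, abs_mul, abs_of_pos (exp_pos b), mul_comm]
  exact mul_le_mul_of_nonneg_right (abs_exp_sub_one_le h) (exp_pos b).le

theorem four_lt_two_mul_exp_one_mul_sqrt_two : 4 < 2 * exp 1 * √2 := by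
  have he : 2 < exp 1 := lt_trans (by norm_num) exp_one_gt_d9
  have hs : 1 ≤ √2 := one_le_sqrt.mpr (by norm_num)
  nlinarith

namespace IsProbDensity

variable {α : Type*} [MeasureSpace α] {ρ ρ' : α → ℝ}

theorem integrable (hρ : IsProbDensity ρ) : Integrable ρ :=
  Integrable.of_integral_ne_zero (by rw [hρ.2.2]; exact one_ne_zero)

theorem integral_abs_sub_le_two (hρ : IsProbDensity ρ) (hρ' : IsProbDensity ρ') :
    ∫ x, |ρ x - ρ' x| ≤ 2 := by
  have hle : ∀ x, |ρ x - ρ' x| ≤ ρ x + ρ' x := fun x => by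
    rw [abs_sub_le_iff]; constructor <;> linarith [hρ.2.1 x, hρ'.2.1 x]
  calc ∫ x, |ρ x - ρ' x| ≤ ∫ x, (ρ x + ρ' x) :=
        integral_mono (hρ.integrable.sub hρ'.integrable).abs
          (hρ.integrable.add hρ'.integrable) hle
    _ = 2 := by rw [integral_add hρ.integrable hρ'.integrable, hρ.2.2, hρ'.2.2]; norm_num

/-- Comparing total masses gives `|Z - Z'| ≤ ε Z`, which costs the second `ε`. -/
theorem integral_abs_sub_le_of_abs_mul_sub_le (hρ : IsProbDensity ρ) (hρ' : IsProbDensity ρ')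
    {Z Z' ε : ℝ} (hZ : 0 < Z) (h : ∀ x, |Z * ρ x - Z' * ρ' x| ≤ ε * (Z * ρ x)) :
    ∫ x, |ρ x - ρ' x| ≤ 2 * ε := by
  have hint : Integrable fun x => Z * ρ x - Z' * ρ' x :=
    (hρ.integrable.const_mul Z).sub (hρ'.integrable.const_mul Z')
  have hdiff : ∫ x, |Z * ρ x - Z' * ρ' x| ≤ ε * Z := by
    calc ∫ x, |Z * ρ x - Z' * ρ' x| ≤ ∫ x, ε * (Z * ρ x) :=
          integral_mono hint.abs ((hρ.integrable.const_mul Z).const_mul ε) h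
      _ = ε * Z := by rw [integral_const_mul, integral_const_mul, hρ.2.2, mul_one]
  have hmass : |Z - Z'| ≤ ε * Z := by
    have : Z - Z' = ∫ x, (Z * ρ x - Z' * ρ' x) := by
      rw [integral_sub (hρ.integrable.const_mul Z) (hρ'.integrable.const_mul Z'),
        integral_const_mul, integral_const_mul, hρ.2.2, hρ'.2.2, mul_one, mul_one]
    rw [this]
    exact (abs_integral_le_integral_abs).trans hdiff
  have hpt : ∀ x, Z * |ρ x - ρ' x| ≤ |Z * ρ x - Z' * ρ' x| + |Z - Z'| * ρ' x := fun x => by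
    calc Z * |ρ x - ρ' x| = |(Z * ρ x - Z' * ρ' x) + (Z' - Z) * ρ' x| := by
          rw [show Z * ρ x - Z' * ρ' x + (Z' - Z) * ρ' x = Z * (ρ x - ρ' x) by ring, abs_mul,
            abs_of_pos hZ]
      _ ≤ |Z * ρ x - Z' * ρ' x| + |(Z' - Z) * ρ' x| := abs_add_le _ _
      _ = _ := by rw [abs_mul, abs_of_nonneg (hρ'.2.1 x), abs_sub_comm Z' Z]
  have hZD : Z * ∫ x, |ρ x - ρ' x| ≤ Z * (2 * ε) := by
    rw [← integral_const_mul]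
    calc ∫ x, Z * |ρ x - ρ' x| ≤ ∫ x, (|Z * ρ x - Z' * ρ' x| + |Z - Z'| * ρ' x) :=
          integral_mono ((hρ.integrable.sub hρ'.integrable).abs.const_mul Z)
            (hint.abs.add (hρ'.integrable.const_mul _)) hpt
      _ ≤ Z * (2 * ε) := by
          rw [integral_add hint.abs (hρ'.integrable.const_mul _), integral_const_mul, hρ'.2.2]
          linarith
  exact le_of_mul_le_mul_left hZD hZ

theorem integral_exp_pos {f : α → ℝ} (hρ : IsProbDensity ρ)
    (hfix : ∀ x, ρ x = exp (f x) / ∫ y, exp (f y)) : 0 < ∫ y, exp (f y) := by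
  refine (integral_nonneg fun y => (exp_pos (f y)).le).lt_of_ne' fun hZ => ?_
  have h := hρ.2.2
  simp_rw [hfix, hZ, div_zero, integral_zero] at h
  exact zero_ne_one h

theorem integral_abs_sub_le_of_gibbs (hρ : IsProbDensity ρ) (hρ' : IsProbDensity ρ')
    {f g : α → ℝ} (hf : ∀ x, ρ x = exp (f x) / ∫ y, exp (f y))
    (hg : ∀ x, ρ' x = exp (g x) / ∫ y, exp (g y))
    {δ : ℝ} (hδ : δ ≤ 1) (hfg : ∀ x, |f x - g x| ≤ δ) :
    ∫ x, |ρ x - ρ' x| ≤ 4 * δ := by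
  have hZ := hρ.integral_exp_pos hf
  have hZ' := hρ'.integral_exp_pos hg
  have hexp : ∀ x, (∫ y, exp (f y)) * ρ x = exp (f x) := fun x => by
    rw [hf x]; field_simp
  have hexp' : ∀ x, (∫ y, exp (g y)) * ρ' x = exp (g x) := fun x => by
    rw [hg x]; field_simp
  have h := hρ.integral_abs_sub_le_of_abs_mul_sub_le hρ' hZ (ε := 2 * δ) fun x => by
    rw [hexp, hexp', abs_sub_comm]
    calc |exp (g x) - exp (f x)| ≤ 2 * |g x - f x| * exp (f x) :=
          abs_exp_sub_exp_le ((abs_sub_comm _ _).trans_le ((hfg x).trans hδ))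
      _ ≤ 2 * δ * exp (f x) := by
          gcongr; exact (abs_sub_comm _ _).trans_le (hfg x)
  linarith

theorem ae_eq_of_integral_abs_sub_eq_zero (hρ : IsProbDensity ρ) (hρ' : IsProbDensity ρ')
    (h : ∫ x, |ρ x - ρ' x| = 0) : ρ =ᵐ[volume] ρ' := by
  have h0 := (integral_eq_zero_iff_of_nonneg (fun x => abs_nonneg _)
    (hρ.integrable.sub hρ'.integrable).abs).mp h
  filter_upwards [h0] with x hx
  exact sub_eq_zero.mp (abs_eq_zero.mp hx)

end IsProbDensity

theorem abs_convW_sub_le {d : ℕ} {W ρ ρ' : (Fin d → ℝ) → ℝ} {M : ℝ} (hW : Measurable W)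
    (hM : ∀ z, |W z| ≤ M) (hρ : Integrable ρ) (hρ' : Integrable ρ') (x : Fin d → ℝ) :
    |convW W ρ x - convW W ρ' x| ≤ M * ∫ y, |ρ y - ρ' y| := by
  have hWx : AEStronglyMeasurable (fun y => W (x - y)) :=
    (hW.comp (measurable_const.sub measurable_id)).aestronglyMeasurable
  have hbdd : ∀ᵐ y, ‖W (x - y)‖ ≤ M := Filter.Eventually.of_forall fun y => hM (x - y)
  rw [convW, convW, ← integral_sub (hρ.bdd_mul hWx hbdd) (hρ'.bdd_mul hWx hbdd),
    ← integral_const_mul]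
  refine abs_integral_le_integral_abs.trans (integral_mono_of_nonneg
    (Filter.Eventually.of_forall fun y => abs_nonneg _)
    ((hρ.sub hρ').abs.const_mul M) (Filter.Eventually.of_forall fun y => ?_))
  change |W (x - y) * ρ y - W (x - y) * ρ' y| ≤ M * |ρ y - ρ' y|
  rw [← mul_sub, abs_mul]
  exact mul_le_mul_of_nonneg_right (hM _) (abs_nonneg _)

theorem minimizer_unique_general {d : ℕ} (β : ℝ) (hβ : 0 < β)
    (U W : (Fin d → ℝ) → ℝ) (hW : Measurable W)
    (hWbdd : ∃ M, ∀ z, |W z| ≤ M)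
    (hβW : β * (2 * Real.exp 1 * Real.sqrt 2 * ⨆ z, |W z|) < 1)
    (ρ ρ' : (Fin d → ℝ) → ℝ) (hρ : IsProbDensity ρ) (hρ' : IsProbDensity ρ')
    (hfix : ∀ x, ρ x = Real.exp (-β * (U x + convW W ρ x)) /
      ∫ y, Real.exp (-β * (U y + convW W ρ y)))
    (hfix' : ∀ x, ρ' x = Real.exp (-β * (U x + convW W ρ' x)) /
      ∫ y, Real.exp (-β * (U y + convW W ρ' y))) :
    ρ =ᵐ[volume] ρ' := by
  set M := ⨆ z, |W z|
  have hM : ∀ z, |W z| ≤ M := fun z =>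
    le_ciSup (hWbdd.imp fun C hC => by rintro _ ⟨z, rfl⟩; exact hC z) z
  set D := ∫ x, |ρ x - ρ' x|
  have hβM : 4 * (β * M) < 1 := by
    nlinarith [four_lt_two_mul_exp_one_mul_sqrt_two, (abs_nonneg _).trans (hM 0)]
  have hD2 : D ≤ 2 := hρ.integral_abs_sub_le_two hρ'
  have hD0 : 0 ≤ D := integral_nonneg fun x => abs_nonneg _
  have hcontr : D ≤ 4 * (β * M * D) := by
    refine hρ.integral_abs_sub_le_of_gibbs hρ' hfix hfix' (by nlinarith) fun x => ?_
    rw [← mul_sub, add_sub_add_left_eq_sub, abs_mul, abs_neg, abs_of_pos hβ, mul_assoc]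
    exact mul_le_mul_of_nonneg_left
      (abs_convW_sub_le hW hM hρ.integrable hρ'.integrable x) hβ.le
  exact hρ.ae_eq_of_integral_abs_sub_eq_zero hρ' (by nlinarith)

/-- uniqueness of the minimizer of the mean-field free energy for
`β < 1/(2e√2 ‖W‖_∞)`: any two probability densities satisfying the fixed-point relation
`ρ = Z⁻¹ exp(−β(U + W∗ρ))` (equivalently, minimizing the free energy) coincide a.e. -/
theorem minimizer_unique {d : ℕ} (β : ℝ) (hβ : 0 < β)
    (U W : (Fin d → ℝ) → ℝ) (hU : Measurable U) (hW : Measurable W)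
    (hWbdd : ∃ M, ∀ z, |W z| ≤ M) (hWsymm : ∀ z, W (-z) = W z)
    (hexp : ∀ N : ℕ, 2 ≤ N →
      Integrable (fun x : Fin N → (Fin d → ℝ) => Real.exp (-β * energyN U W N x)))
    (hβW : β * (2 * Real.exp 1 * Real.sqrt 2 * ⨆ z, |W z|) < 1)
    (ρ ρ' : (Fin d → ℝ) → ℝ) (hρ : IsProbDensity ρ) (hρ' : IsProbDensity ρ')
    (hfix : ∀ x, ρ x = Real.exp (-β * (U x + convW W ρ x)) /
      ∫ y, Real.exp (-β * (U y + convW W ρ y)))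
    (hfix' : ∀ x, ρ' x = Real.exp (-β * (U x + convW W ρ' x)) /
      ∫ y, Real.exp (-β * (U y + convW W ρ' y))) :
    ρ =ᵐ[volume] ρ' :=
  minimizer_unique_general β hβ U W hW hWbdd hβW ρ ρ' hρ hρ' hfix hfix'
end
end

section
/- Under the hypotheses of the main theorem — β < 1/(2e√2 ‖W‖_∞), W ∈ L^∞(ℝ^d) symmetric, exp(−βE_N) ∈ L¹(ℝ^{Nd}), ρ a minimizer of the mean-field free energy satisfying ρ = Z^{−1}exp(−β(U+W∗ρ)), and (X_1,…,X_N) distributed according to the Gibbs density ρ_N — there exist N_0 > 0 and C < ∞ such that sup_{N > N_0} 𝔼[ (1/N) Σ_{i,j=1}^N W(X_i − X_j) − 2 Σ_{i=1}^N (W∗ρ)(X_i) + N ∫_{ℝ^d} ρ (W∗ρ) dx ] ≤ C. Equivalently, the fluctuation measures 𝒢_N = √N (μ_N − ρ) with μ_N = (1/N)Σ_i δ_{X_i} satisfy sup_{N>N_0} 𝔼 ⟨ W(x−y), 𝒢_N ⊗ 𝒢_N ⟩ < ∞. -/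
/-!
Let `K(a, b) = W(a - b) - (W∗ρ)(a) - (W∗ρ)(b) + ∫ ρ (W∗ρ)` and `G(x) = Σ_{i ≠ j} K(x_i, x_j)`.
Expanding `G` and inserting the fixed-point equation `e^{-β(U + W∗ρ)} ∝ ρ` shows that the Gibbs
measure is the product measure `ρ^{⊗N}` tilted by `e^{-tG}`, with `t = β / (2(N - 1)) ≥ 0`.
Since `∫ K(a, b) ρ(b) db = 0`, `G` has mean zero under `ρ^{⊗N}`, and `G e^{-tG} ≤ G` pointwise,
so the Gibbs expectation of `G` is nonpositive. The integrand equals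
`W(0) + ∫ ρ (W∗ρ) + (G - 2 Σ_i (W∗ρ)(x_i)) / N`, hence is bounded in expectation by
`|W(0)| + |∫ ρ (W∗ρ)| + 2 ‖W‖_∞`.
-/

open MeasureTheory Real

noncomputable section

/-- The `N`-body Gibbs measure, with density `Z̄_N⁻¹ exp(−β E_N)` w.r.t. Lebesgue measure. -/
def gibbsMeasure {d : ℕ} (U W : (Fin d → ℝ) → ℝ) (β : ℝ) (N : ℕ) :
    Measure (Fin N → (Fin d → ℝ)) :=
  volume.withDensity fun x => ENNReal.ofReal (Real.exp (-β * energyN U W N x) /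
    ∫ y : Fin N → (Fin d → ℝ), Real.exp (-β * energyN U W N y))

lemma mul_exp_neg_mul_le_self {t : ℝ} (ht : 0 ≤ t) (a : ℝ) : a * exp (-(t * a)) ≤ a := by
  rcases le_total 0 a with ha | ha
  · exact mul_le_of_le_one_right ha (exp_le_one_iff.mpr (by nlinarith))
  · have : 1 ≤ exp (-(t * a)) := one_le_exp (by nlinarith)
    nlinarith

section Density

variable {α : Type*} [MeasurableSpace α] {μ : Measure α}

lemma integral_withDensity_ofReal {g : α → ℝ} (hg : Measurable g) (hg0 : ∀ x, 0 ≤ g x)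
    (f : α → ℝ) :
    ∫ x, f x ∂μ.withDensity (fun x => ENNReal.ofReal (g x)) = ∫ x, g x * f x ∂μ := by
  rw [integral_withDensity_eq_integral_toReal_smul (by fun_prop)
    (ae_of_all _ fun _ => ENNReal.ofReal_lt_top)]
  simp only [ENNReal.toReal_ofReal (hg0 _), smul_eq_mul]

lemma withDensity_ofReal_div_integral_univ_le_one {f : α → ℝ} (hf0 : ∀ x, 0 ≤ f x) :
    μ.withDensity (fun x => ENNReal.ofReal (f x / ∫ y, f y ∂μ)) Set.univ ≤ 1 := by
  rw [withDensity_apply _ MeasurableSet.univ, Measure.restrict_univ]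
  -- if `f` is not integrable then `∫ f = 0` and the density vanishes
  by_cases hf : Integrable f μ
  · rw [← ofReal_integral_eq_lintegral_ofReal (hf.div_const _)
      (ae_of_all _ fun x => div_nonneg (hf0 x) (integral_nonneg hf0)), integral_div]
    exact ENNReal.ofReal_le_one.mpr (div_self_le_one _)
  · simp [integral_undef hf]

lemma integral_le_of_le_add_mul {ν : Measure α} (hν : ν Set.univ ≤ 1) {f g : α → ℝ} {C a : ℝ}
    (hC : 0 ≤ C) (ha : 0 ≤ a) (hf : Integrable f ν) (hg : Integrable g ν)
    (hfg : ∀ x, f x ≤ C + a * g x) (hg0 : ∫ x, g x ∂ν ≤ 0) : ∫ x, f x ∂ν ≤ C := by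
  have : IsFiniteMeasure ν := ⟨hν.trans_lt ENNReal.one_lt_top⟩
  have hν' : ν.real Set.univ ≤ 1 := ENNReal.toReal_le_of_le_ofReal zero_le_one (by simpa using hν)
  calc ∫ x, f x ∂ν ≤ ∫ x, (C + a * g x) ∂ν :=
        integral_mono hf ((integrable_const C).add (hg.const_mul a)) hfg
    _ = C * ν.real Set.univ + a * ∫ x, g x ∂ν := by
        rw [integral_add (integrable_const C) (hg.const_mul a), integral_const, integral_const_mul,
          smul_eq_mul, mul_comm]
    _ ≤ C := by nlinarith [mul_le_mul_of_nonneg_left hν' hC, mul_nonpos_of_nonneg_of_nonpos ha hg0]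

end Density

section PairSum

variable {α : Type*} {N : ℕ}

def pairSum (K : α → α → ℝ) (x : Fin N → α) : ℝ :=
  ∑ i, ∑ j ∈ Finset.univ.erase i, K (x i) (x j)

lemma Fin.cast_card_univ_erase (i : Fin N) : ((Finset.univ.erase i).card : ℝ) = N - 1 := by
  rw [Finset.card_erase_of_mem (Finset.mem_univ i), Finset.card_univ, Fintype.card_fin,
    Nat.cast_sub i.pos, Nat.cast_one]

lemma pairSum_const (c : ℝ) (x : Fin N → α) : pairSum (fun _ _ => c) x = N * (N - 1) * c := by
  simp only [pairSum, Finset.sum_const, nsmul_eq_mul, Fin.cast_card_univ_erase, Finset.card_univ,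
    Fintype.card_fin]
  ring

lemma pairSum_sub_sub_add (V : α → α → ℝ) (f : α → ℝ) (c : ℝ) (x : Fin N → α) :
    pairSum (fun a b => V a b - f a - f b + c) x
      = pairSum V x - 2 * ((N : ℝ) - 1) * ∑ i, f (x i) + N * (N - 1) * c := by
  have hrow : ∀ i : Fin N, ∑ j ∈ Finset.univ.erase i, (V (x i) (x j) - f (x i) - f (x j) + c)
      = ∑ j ∈ Finset.univ.erase i, V (x i) (x j) - ((N : ℝ) - 1) * f (x i)
        - (∑ j, f (x j) - f (x i)) + ((N : ℝ) - 1) * c := by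
    intro i
    rw [Finset.sum_add_distrib, Finset.sum_sub_distrib, Finset.sum_sub_distrib, Finset.sum_const,
      Finset.sum_const, nsmul_eq_mul, nsmul_eq_mul, Fin.cast_card_univ_erase,
      Finset.sum_erase_eq_sub (f := fun j => f (x j)) (Finset.mem_univ i)]
  simp only [pairSum, hrow, Finset.sum_add_distrib, Finset.sum_sub_distrib, ← Finset.mul_sum,
    Finset.sum_const, Finset.card_univ, Fintype.card_fin, nsmul_eq_mul]
  ring

lemma abs_pairSum_le {K : α → α → ℝ} {B : ℝ} (hKB : ∀ a b, |K a b| ≤ B) (x : Fin N → α) :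
    |pairSum K x| ≤ N * (N - 1) * B := by
  rw [← pairSum_const B x]
  refine (Finset.abs_sum_le_sum_abs _ _).trans (Finset.sum_le_sum fun i _ => ?_)
  exact (Finset.abs_sum_le_sum_abs _ _).trans (Finset.sum_le_sum fun j _ => hKB _ _)

lemma measurable_pairSum [MeasurableSpace α] {K : α → α → ℝ}
    (hK : Measurable (Function.uncurry K)) :
    Measurable (pairSum K : (Fin N → α) → ℝ) := by
  unfold pairSum
  fun_prop

def tiltedProductDensity (ρ : α → ℝ) (K : α → α → ℝ) (t : ℝ) (x : Fin N → α) : ℝ :=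
  (∏ k, ρ (x k)) * exp (-(t * pairSum K x))

lemma tiltedProductDensity_nonneg {ρ : α → ℝ} {K : α → α → ℝ} {t : ℝ} (hρ0 : ∀ a, 0 ≤ ρ a)
    (x : Fin N → α) :
    0 ≤ tiltedProductDensity ρ K t x :=
  mul_nonneg (Finset.prod_nonneg fun k _ => hρ0 (x k)) (exp_pos _).le

end PairSum

section Product

variable {α : Type*} [MeasureSpace α] [SigmaFinite (volume : Measure α)]

lemma integral_apply_apply_mul_prod_eq_zero {n : ℕ} {K : α → α → ℝ} {ρ : α → ℝ}
    (hK : ∀ a, ∫ b, K a b * ρ b = 0) {i j : Fin n} (hij : i ≠ j) :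
    ∫ x : Fin n → α, K (x i) (x j) * ∏ k, ρ (x k) = 0 := by
  by_cases hint : Integrable fun x : Fin n → α => K (x i) (x j) * ∏ k, ρ (x k)
  swap
  · exact integral_undef hint
  cases n with
  | zero => exact i.elim0
  | succ n =>
    obtain ⟨k, rfl⟩ := Fin.exists_succAbove_eq hij
    have e :=
      (measurePreserving_piFinSuccAbove (fun _ : Fin (n + 1) => (volume : Measure α)) j).symm
    have hslice : ∀ (r : Fin n → α) (y : α),
        K (Fin.insertNth (α := fun _ => α) j y r (j.succAbove k))
            (Fin.insertNth (α := fun _ => α) j y r j)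
            * ∏ l, ρ (Fin.insertNth (α := fun _ => α) j y r l)
          = K (r k) y * ρ y * ∏ l, ρ (r l) := by
      intro r y
      rw [Fin.prod_univ_succAbove _ j]
      simp only [Fin.insertNth_apply_same, Fin.insertNth_apply_succAbove]
      ring
    -- Fubini, integrating out the coordinate `j` first
    rw [volume_pi] at hint ⊢
    rw [← e.integral_comp']
    refine (integral_prod_symm _
      ((e.integrable_comp_emb (MeasurableEquiv.measurableEmbedding _)).mpr hint)).trans ?_
    simp only [MeasurableEquiv.piFinSuccAbove_symm_apply, Function.comp_apply,
      Fin.insertNthEquiv_apply, hslice, integral_mul_const, hK, zero_mul, integral_zero]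

lemma integral_pairSum_mul_prod_eq_zero {N : ℕ} {K : α → α → ℝ} {ρ : α → ℝ} {B : ℝ}
    (hKm : Measurable (Function.uncurry K)) (hKB : ∀ a b, |K a b| ≤ B) (hρ : Integrable ρ)
    (hK : ∀ a, ∫ b, K a b * ρ b = 0) :
    ∫ x : Fin N → α, pairSum K x * ∏ k, ρ (x k) = 0 := by
  have hterm : ∀ i j : Fin N, Integrable fun x : Fin N → α => K (x i) (x j) * ∏ k, ρ (x k) :=
    fun i j => (Integrable.fintype_prod fun _ => hρ).bdd_mul
      (hKm.comp (f := fun x : Fin N → α => (x i, x j)) (by fun_prop)).aestronglyMeasurable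
      (ae_of_all _ fun x => (Real.norm_eq_abs _).trans_le (hKB _ _))
  simp only [pairSum, Finset.sum_mul]
  rw [integral_finsetSum _ fun i _ => integrable_finsetSum _ fun j _ => hterm i j]
  refine Finset.sum_eq_zero fun i _ => ?_
  rw [integral_finsetSum _ fun j _ => hterm i j]
  exact Finset.sum_eq_zero fun j hj =>
    integral_apply_apply_mul_prod_eq_zero hK (Finset.ne_of_mem_erase hj).symm

lemma integral_pairSum_withDensity_tiltedProductDensity_nonpos {N : ℕ} {K : α → α → ℝ}
    {ρ : α → ℝ} {t B : ℝ}
    (hKm : Measurable (Function.uncurry K)) (hKB : ∀ a b, |K a b| ≤ B) (hρm : Measurable ρ)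
    (hρ0 : ∀ a, 0 ≤ ρ a) (hρ : Integrable ρ) (hK : ∀ a, ∫ b, K a b * ρ b = 0) (ht : 0 ≤ t) :
    ∫ x, pairSum K x ∂volume.withDensity (fun x : Fin N → α => ENNReal.ofReal
      (tiltedProductDensity ρ K t x / ∫ y : Fin N → α, tiltedProductDensity ρ K t y)) ≤ 0 := by
  set C : ℝ := N * (N - 1) * B
  have hP : Integrable fun x : Fin N → α => ∏ k, ρ (x k) := Integrable.fintype_prod fun _ => hρ
  have hGm : Measurable (pairSum K : (Fin N → α) → ℝ) := measurable_pairSum hKm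
  have hgm : Measurable (tiltedProductDensity ρ K t : (Fin N → α) → ℝ) := by
    unfold tiltedProductDensity; fun_prop
  have hGexp : ∀ x : Fin N → α, ‖pairSum K x * exp (-(t * pairSum K x))‖ ≤ C * exp (t * C) := by
    intro x
    have hG := abs_pairSum_le hKB x
    rw [Real.norm_eq_abs, abs_mul, abs_exp]
    refine mul_le_mul hG (exp_le_exp.mpr ?_) (exp_pos _).le ((abs_nonneg _).trans hG)
    nlinarith [neg_abs_le (pairSum K x)]
  rw [integral_withDensity_ofReal (hgm.div_const _)
    fun x => div_nonneg (tiltedProductDensity_nonneg hρ0 x)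
      (integral_nonneg (tiltedProductDensity_nonneg hρ0))]
  simp only [div_mul_eq_mul_div]
  rw [integral_div]
  refine div_nonpos_of_nonpos_of_nonneg ?_ (integral_nonneg (tiltedProductDensity_nonneg hρ0))
  calc ∫ x, tiltedProductDensity ρ K t x * pairSum K x
      = ∫ x, pairSum K x * exp (-(t * pairSum K x)) * ∏ k, ρ (x k) := by
        simp only [tiltedProductDensity]; congr 1; ext x; ring
    _ ≤ ∫ x, pairSum K x * ∏ k, ρ (x k) :=
        integral_mono (hP.bdd_mul (by fun_prop) (ae_of_all _ hGexp))
          (hP.bdd_mul hGm.aestronglyMeasurable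
            (ae_of_all _ fun x => (Real.norm_eq_abs _).trans_le (abs_pairSum_le hKB x)))
          fun x => mul_le_mul_of_nonneg_right (mul_exp_neg_mul_le_self ht _)
            (Finset.prod_nonneg fun k _ => hρ0 (x k))
    _ = 0 := integral_pairSum_mul_prod_eq_zero hKm hKB hρ hK

end Product

lemma IsProbDensity.integrable_s16 {α : Type*} [MeasureSpace α] {ρ : α → ℝ} (hρ : IsProbDensity ρ) :
    Integrable ρ := by
  by_contra h
  simpa [integral_undef h] using hρ.2.2

lemma IsProbDensity.abs_integral_mul_le {α : Type*} [MeasureSpace α] {ρ f : α → ℝ}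
    (hρ : IsProbDensity ρ) {M : ℝ} (hM : ∀ a, |f a| ≤ M) : |∫ a, f a * ρ a| ≤ M := by
  rw [← Real.norm_eq_abs]
  calc ‖∫ a, f a * ρ a‖ ≤ ∫ a, M * ρ a :=
        norm_integral_le_of_norm_le (hρ.integrable_s16.const_mul M) (ae_of_all _ fun a => by
          rw [Real.norm_eq_abs, abs_mul, abs_of_nonneg (hρ.2.1 a)]
          exact mul_le_mul_of_nonneg_right (hM a) (hρ.2.1 a))
    _ = M := by rw [integral_const_mul, hρ.2.2, mul_one]

lemma integral_ne_zero_and_eq_mul_of_eq_div {α : Type*} [MeasureSpace α] {ρ f : α → ℝ}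
    (hρ : ∫ a, ρ a = 1) (hf : ∀ a, ρ a = f a / ∫ b, f b) :
    (∫ b, f b) ≠ 0 ∧ ∀ a, f a = (∫ b, f b) * ρ a := by
  have hZ : (∫ b, f b) ≠ 0 := fun hZ => by simp [hf, hZ] at hρ
  exact ⟨hZ, fun a => by rw [hf a, mul_div_cancel₀ _ hZ]⟩

section MeanField

variable {d : ℕ} {W ρ : (Fin d → ℝ) → ℝ}

lemma measurable_convW (hW : Measurable W) (hρ : Measurable ρ) : Measurable (convW W ρ) :=
  (((hW.comp (measurable_fst.sub measurable_snd)).mul (hρ.comp measurable_snd)).stronglyMeasurable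
    |>.integral_prod_right').measurable

lemma abs_convW_le (hρ : IsProbDensity ρ) {M : ℝ} (hM : ∀ z, |W z| ≤ M) (x : Fin d → ℝ) :
    |convW W ρ x| ≤ M :=
  hρ.abs_integral_mul_le fun y => hM (x - y)

/-- `W(x - y)` integrated against `(δ_a - ρ) ⊗ (δ_b - ρ)`. -/
def fluctuationKernel (W ρ : (Fin d → ℝ) → ℝ) (a b : Fin d → ℝ) : ℝ :=
  W (a - b) - convW W ρ a - convW W ρ b + ∫ y, ρ y * convW W ρ y

lemma measurable_fluctuationKernel (hW : Measurable W) (hρ : Measurable ρ) :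
    Measurable (Function.uncurry (fluctuationKernel W ρ)) := by
  have := measurable_convW hW hρ
  unfold fluctuationKernel Function.uncurry
  fun_prop

lemma abs_fluctuationKernel_le (hρ : IsProbDensity ρ) {M : ℝ} (hM : ∀ z, |W z| ≤ M)
    (a b : Fin d → ℝ) : |fluctuationKernel W ρ a b| ≤ 4 * M := by
  have hc : |∫ y, ρ y * convW W ρ y| ≤ M := by
    simpa only [mul_comm] using hρ.abs_integral_mul_le (abs_convW_le hρ hM)
  unfold fluctuationKernel
  have := abs_convW_le hρ hM a
  have := abs_convW_le hρ hM b
  have := hM (a - b)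
  rw [abs_le] at *
  constructor <;> linarith

lemma integral_fluctuationKernel_mul (hW : Measurable W) (hρ : IsProbDensity ρ) {M : ℝ}
    (hM : ∀ z, |W z| ≤ M) (a : Fin d → ℝ) : ∫ b, fluctuationKernel W ρ a b * ρ b = 0 := by
  have hρi := hρ.integrable_s16
  have hWρ : Integrable fun b => W (a - b) * ρ b :=
    hρi.bdd_mul (hW.comp (measurable_const.sub measurable_id)).aestronglyMeasurable
      (ae_of_all _ fun b => (Real.norm_eq_abs _).trans_le (hM _))
  have hconvρ : Integrable fun b => convW W ρ b * ρ b :=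
    hρi.bdd_mul (measurable_convW hW hρ.1).aestronglyMeasurable
      (ae_of_all _ fun b => (Real.norm_eq_abs _).trans_le (abs_convW_le hρ hM b))
  have h1 : Integrable fun b => W (a - b) * ρ b - convW W ρ a * ρ b := hWρ.sub (hρi.const_mul _)
  have h2 : Integrable fun b => W (a - b) * ρ b - convW W ρ a * ρ b - convW W ρ b * ρ b :=
    h1.sub hconvρ
  simp only [fluctuationKernel, add_mul, sub_mul]
  rw [integral_add h2 (hρi.const_mul _), integral_sub h1 hconvρ, integral_sub hWρ (hρi.const_mul _),
    integral_const_mul, integral_const_mul, hρ.2.2]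
  simp only [mul_comm (convW W ρ _) (ρ _)]
  change convW W ρ a - _ - _ + _ = 0
  ring

end MeanField

section NBody

variable {d N : ℕ} {U W ρ : (Fin d → ℝ) → ℝ} {β : ℝ}

lemma pairSum_fluctuationKernel (x : Fin N → Fin d → ℝ) :
    pairSum (fluctuationKernel W ρ) x = pairSum (fun a b => W (a - b)) x
      - 2 * ((N : ℝ) - 1) * ∑ i, convW W ρ (x i) + N * (N - 1) * ∫ y, ρ y * convW W ρ y :=
  pairSum_sub_sub_add _ _ _ x

lemma neg_mul_energyN_eq (hN : N ≠ 1) (x : Fin N → Fin d → ℝ) :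
    -β * energyN U W N x = ∑ i, -β * (U (x i) + convW W ρ (x i))
      - β / (2 * (N - 1)) * pairSum (fluctuationKernel W ρ) x
      + β * N * (∫ y, ρ y * convW W ρ y) / 2 := by
  have hN' : (N : ℝ) - 1 ≠ 0 := sub_ne_zero.mpr (by exact_mod_cast hN)
  rw [pairSum_fluctuationKernel]
  simp only [energyN, pairSum, Finset.sum_add_distrib, ← Finset.mul_sum]
  field_simp
  ring

lemma exp_neg_mul_energyN_eq (hN : N ≠ 1) {Z : ℝ}
    (hZ : ∀ y, exp (-β * (U y + convW W ρ y)) = Z * ρ y) (x : Fin N → Fin d → ℝ) :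
    exp (-β * energyN U W N x) = Z ^ N * exp (β * N * (∫ y, ρ y * convW W ρ y) / 2)
      * tiltedProductDensity ρ (fluctuationKernel W ρ) (β / (2 * (N - 1))) x := by
  rw [neg_mul_energyN_eq (ρ := ρ) hN, exp_add, exp_sub, exp_sum]
  simp only [hZ, Finset.prod_mul_distrib, Finset.prod_const, Finset.card_univ, Fintype.card_fin,
    tiltedProductDensity, exp_neg]
  ring

lemma gibbsMeasure_eq_withDensity_tiltedProductDensity (hN : N ≠ 1) {Z : ℝ} (hZ0 : Z ≠ 0)
    (hZ : ∀ y, exp (-β * (U y + convW W ρ y)) = Z * ρ y) :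
    gibbsMeasure U W β N = volume.withDensity fun x => ENNReal.ofReal
      (tiltedProductDensity ρ (fluctuationKernel W ρ) (β / (2 * (N - 1))) x
        / ∫ y : Fin N → Fin d → ℝ,
          tiltedProductDensity ρ (fluctuationKernel W ρ) (β / (2 * (N - 1))) y) := by
  have hA : Z ^ N * exp (β * N * (∫ y, ρ y * convW W ρ y) / 2) ≠ 0 :=
    mul_ne_zero (pow_ne_zero _ hZ0) (exp_pos _).ne'
  simp only [gibbsMeasure, exp_neg_mul_energyN_eq hN hZ, integral_const_mul,
    mul_div_mul_left _ _ hA]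

lemma fluctuationEnergy_le_add_pairSum (hN : N ≠ 0) (hρ : IsProbDensity ρ) {M : ℝ} (hM : ∀ z, |W z| ≤ M)
    (x : Fin N → Fin d → ℝ) :
    1 / (N : ℝ) * (∑ i, ∑ j, W (x i - x j)) - 2 * (∑ i, convW W ρ (x i))
        + N * ∫ y, ρ y * convW W ρ y
      ≤ |W 0| + |∫ y, ρ y * convW W ρ y| + 2 * M
        + 1 / N * pairSum (fluctuationKernel W ρ) x := by
  have hN' : (N : ℝ) ≠ 0 := by exact_mod_cast hN
  have hdiag : ∑ i, ∑ j, W (x i - x j) = N * W 0 + pairSum (fun a b => W (a - b)) x := by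
    have hrow : ∀ i, ∑ j, W (x i - x j) = W 0 + ∑ j ∈ Finset.univ.erase i, W (x i - x j) :=
      fun i => by rw [← Finset.add_sum_erase _ _ (Finset.mem_univ i), sub_self]
    simp only [hrow, pairSum, Finset.sum_add_distrib, Finset.sum_const, Finset.card_univ,
      Fintype.card_fin, nsmul_eq_mul]
  have hS : |∑ i, convW W ρ (x i)| ≤ N * M := by
    refine (Finset.abs_sum_le_sum_abs _ _).trans ?_
    simpa using Finset.sum_le_sum fun i (_ : i ∈ Finset.univ) => abs_convW_le hρ hM (x i)
  have hS' : -M ≤ 1 / (N : ℝ) * ∑ i, convW W ρ (x i) := by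
    rw [one_div, ← div_eq_inv_mul, le_div_iff₀ (by positivity)]
    linarith [neg_abs_le (∑ i, convW W ρ (x i))]
  rw [pairSum_fluctuationKernel, hdiag]
  have hid : ∀ w P S c : ℝ, 1 / (N : ℝ) * (N * w + P) - 2 * S + N * c
      = w + c + 1 / N * (P - 2 * (N - 1) * S + N * (N - 1) * c) - 2 * (1 / N * S) := by
    intro w P S c
    field_simp
    ring
  rw [hid]
  linarith [le_abs_self (W 0), le_abs_self (∫ y, ρ y * convW W ρ y)]

lemma integrable_fluctuationEnergy (hW : Measurable W) (hρ : IsProbDensity ρ) {M : ℝ}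
    (hM : ∀ z, |W z| ≤ M) (ν : Measure (Fin N → Fin d → ℝ)) [IsFiniteMeasure ν] :
    Integrable (fun x => 1 / (N : ℝ) * (∑ i, ∑ j, W (x i - x j))
      - 2 * (∑ i, convW W ρ (x i)) + N * ∫ y, ρ y * convW W ρ y) ν := by
  have hconv := measurable_convW hW hρ.1
  have hpair : Integrable (fun x : Fin N → Fin d → ℝ => ∑ i, ∑ j, W (x i - x j)) ν :=
    integrable_finsetSum _ fun i _ => integrable_finsetSum _ fun j _ =>
      .of_bound (Measurable.aestronglyMeasurable (by fun_prop)) M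
        (ae_of_all _ fun x => (Real.norm_eq_abs _).trans_le (hM _))
  have hsum : Integrable (fun x : Fin N → Fin d → ℝ => ∑ i, convW W ρ (x i)) ν :=
    integrable_finsetSum _ fun i _ => .of_bound (Measurable.aestronglyMeasurable (by fun_prop)) M
      (ae_of_all _ fun x => (Real.norm_eq_abs _).trans_le (abs_convW_le hρ hM _))
  exact ((hpair.const_mul _).sub (hsum.const_mul _)).add (integrable_const _)

end NBody

theorem fluctuation_interaction_bound_general {d : ℕ} (β : ℝ) (hβ : 0 < β)
    (U W : (Fin d → ℝ) → ℝ) (hW : Measurable W)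
    (hWbdd : ∃ M, ∀ z, |W z| ≤ M)
    (ρ : (Fin d → ℝ) → ℝ) (hρ : IsProbDensity ρ)
    (hfix : ∀ x, ρ x = Real.exp (-β * (U x + convW W ρ x)) /
      ∫ y, Real.exp (-β * (U y + convW W ρ y))) :
    ∃ N₀ : ℕ, 0 < N₀ ∧ ∃ C : ℝ, ∀ N : ℕ, N₀ < N →
      (∫ x : Fin N → (Fin d → ℝ),
          ((1 / (N : ℝ)) * (∑ i, ∑ j, W (x i - x j))
            - 2 * (∑ i, convW W ρ (x i))
            + (N : ℝ) * ∫ y, ρ y * convW W ρ y)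
        ∂(gibbsMeasure U W β N)) ≤ C := by
  obtain ⟨M, hM⟩ := hWbdd
  have hM0 : 0 ≤ M := (abs_nonneg _).trans (hM 0)
  obtain ⟨hZ0, hZ⟩ := integral_ne_zero_and_eq_mul_of_eq_div hρ.2.2 hfix
  refine ⟨1, one_pos, |W 0| + |∫ y, ρ y * convW W ρ y| + 2 * M, fun N hN => ?_⟩
  rw [gibbsMeasure_eq_withDensity_tiltedProductDensity (by omega) hZ0 hZ]
  set t := β / (2 * ((N : ℝ) - 1))
  have ht : 0 ≤ t := div_nonneg hβ.le (by linarith [show (1 : ℝ) < N by exact_mod_cast hN])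
  have hν := withDensity_ofReal_div_integral_univ_le_one (μ := volume)
    (tiltedProductDensity_nonneg (N := N) (K := fluctuationKernel W ρ) (t := t) hρ.2.1)
  have : IsFiniteMeasure _ := ⟨hν.trans_lt ENNReal.one_lt_top⟩
  have hK := measurable_fluctuationKernel hW hρ.1
  refine integral_le_of_le_add_mul hν (by positivity) (by positivity)
    (integrable_fluctuationEnergy hW hρ hM _)
    (.of_bound (measurable_pairSum hK).aestronglyMeasurable _
      (ae_of_all _ fun x => (Real.norm_eq_abs _).trans_le
        (abs_pairSum_le (abs_fluctuationKernel_le hρ hM) x)))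
    (fluctuationEnergy_le_add_pairSum (by omega) hρ hM)
    (integral_pairSum_withDensity_tiltedProductDensity_nonpos hK
      (abs_fluctuationKernel_le hρ hM) hρ.1 hρ.2.1 hρ.integrable_s16
      (integral_fluctuationKernel_mul hW hρ hM) ht)

/-- fluctuation bound. Under the hypotheses of the main theorem, with
`(X₁,…,X_N) ∼ ρ_N`, the interaction fluctuation satisfies
`sup_{N>N₀} 𝔼[(1/N)Σ_{i,j} W(Xᵢ−Xⱼ) − 2Σᵢ(W∗ρ)(Xᵢ) + N∫ρ(W∗ρ)] ≤ C`, i.e.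
`sup_{N>N₀} 𝔼 ⟨W(x−y), 𝒢_N ⊗ 𝒢_N⟩ < ∞` for the fluctuation measure `𝒢_N = √N(μ_N − ρ)`. -/
theorem fluctuation_interaction_bound {d : ℕ} (β : ℝ) (hβ : 0 < β)
    (U W : (Fin d → ℝ) → ℝ) (hU : Measurable U) (hW : Measurable W)
    (hWbdd : ∃ M, ∀ z, |W z| ≤ M) (hWsymm : ∀ z, W (-z) = W z)
    (hexp : ∀ N : ℕ, 2 ≤ N →
      Integrable (fun x : Fin N → (Fin d → ℝ) => Real.exp (-β * energyN U W N x)))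
    (hβW : β * (2 * Real.exp 1 * Real.sqrt 2 * ⨆ z, |W z|) < 1)
    (ρ : (Fin d → ℝ) → ℝ) (hρ : IsProbDensity ρ)
    (hfix : ∀ x, ρ x = Real.exp (-β * (U x + convW W ρ x)) /
      ∫ y, Real.exp (-β * (U y + convW W ρ y))) :
    ∃ N₀ : ℕ, 0 < N₀ ∧ ∃ C : ℝ, ∀ N : ℕ, N₀ < N →
      (∫ x : Fin N → (Fin d → ℝ),
          ((1 / (N : ℝ)) * (∑ i, ∑ j, W (x i - x j))
            - 2 * (∑ i, convW W ρ (x i))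
            + (N : ℝ) * ∫ y, ρ y * convW W ρ y)
        ∂(gibbsMeasure U W β N)) ≤ C :=
  fluctuation_interaction_bound_general β hβ U W hW hWbdd ρ hρ hfix
end
end
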